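/- For every integer k ≥ 2, S_k = (1/2)·log(2k) − (1/2)·∫₀¹ Q_k(t)/(1+t^k) dt, where S_k = Σ_{n=1}^∞ (−1)^{n−1}·(log k − (H_{kn} − H_n)) and Q_k(t) = 1 + t + ⋯ + t^{k−1}. -/

import Mathlib

/-!
Write `aₙ = log k − (H_{k(n+1)} − H_{n+1})`. Since `∫₀¹ t^N Q_k(t) dt = H_{N+k} − H_N`, one has
`aₙ − aₙ₊₁ = ∫₀¹ t^{k(n+1)} (Q_k(t) − k t^{k−1}) dt ≥ 0`, and `aₙ → 0` because `H_n − log n → γ`;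
so the alternating series converges, and its sum is the limit of the even partial sums. These
group into pairs; summing the geometric series in `t^{2k}` under the integral, with
`Q_k (Q_k − k t^{k−1}) = Q_k' (1 − t^k)`, they tend to `∫₀¹ φ` for the kernel
`φ = t^k Q_k' / (Q_k (1 + t^k))`. Finally `2φ + Q_k / (1 + t^k)` is the logarithmic derivative
of `Q_k(t) (1 + t^k)`, whose integral over `[0, 1]` is `log (2k)`.
-/

open Filter Topology intervalIntegral

/-- The `n`-th harmonic number `Hₙ = Σ_{j=1}^n 1/j`. -/
noncomputable def H (n : ℕ) : ℝ := ∑ j ∈ Finset.range n, 1 / ((j : ℝ) + 1)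

noncomputable def Q (k : ℕ) : ℝ → ℝ := fun t => ∑ i ∈ Finset.range k, t ^ i

noncomputable def Q' (k : ℕ) : ℝ → ℝ := fun t => ∑ i ∈ Finset.range (k - 1), ((i : ℝ) + 1) * t ^ i

lemma tendsto_integral_mul_pow {f : ℝ → ℝ} (hf : ContinuousOn f (Set.Icc 0 1)) :
    Tendsto (fun n : ℕ => ∫ t in (0 : ℝ)..1, f t * t ^ n) atTop (𝓝 0) := by
  obtain ⟨C, hC⟩ := isCompact_Icc.exists_bound_of_continuousOn hf
  have hbound (n : ℕ) : ‖∫ t in (0 : ℝ)..1, f t * t ^ n‖ ≤ C / (n + 1) :=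
    calc ‖∫ t in (0 : ℝ)..1, f t * t ^ n‖ ≤ ∫ t in (0 : ℝ)..1, C * t ^ n := by
          refine norm_integral_le_of_norm_le zero_le_one (Filter.Eventually.of_forall fun t ht => ?_)
            ((by fun_prop : Continuous _).intervalIntegrable _ _)
          rw [norm_mul, norm_pow, Real.norm_of_nonneg ht.1.le]
          exact mul_le_mul_of_nonneg_right (hC t (Set.Ioc_subset_Icc_self ht)) (pow_nonneg ht.1.le n)
      _ = C / (n + 1) := by simp [integral_pow, div_eq_mul_inv]
  refine squeeze_zero_norm hbound (tendsto_const_nhds.div_atTop ?_)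
  exact tendsto_atTop_add_const_right _ 1 tendsto_natCast_atTop_atTop

lemma H_add (a b : ℕ) : H (a + b) = H a + ∑ r ∈ Finset.range b, 1 / ((a : ℝ) + r + 1) := by
  simp only [H, Finset.sum_range_add]
  push_cast
  rfl

lemma H_eq_harmonic (n : ℕ) : H n = harmonic n := by
  simp [H, harmonic, one_div]

lemma integral_pow_mul_Q (N k : ℕ) : ∫ t in (0 : ℝ)..1, t ^ N * Q k t = H (N + k) - H N := by
  simp only [Q, Finset.mul_sum, ← pow_add]
  rw [integral_finsetSum fun i _ => (continuous_pow _).intervalIntegrable _ _, H_add]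
  simp [integral_pow, add_assoc]

@[fun_prop]
lemma continuous_Q (k : ℕ) : Continuous (Q k) := by
  unfold Q; fun_prop

@[fun_prop]
lemma continuous_Q' (k : ℕ) : Continuous (Q' k) := by
  unfold Q'; fun_prop

lemma hasDerivAt_Q (k : ℕ) (t : ℝ) : HasDerivAt (Q k) (Q' k t) t := by
  have h : HasDerivAt (Q k) (∑ i ∈ Finset.range k, (i : ℝ) * t ^ (i - 1)) t :=
    HasDerivAt.fun_sum fun i _ => hasDerivAt_pow i t
  rcases k with _ | K
  · simpa [Q'] using h
  · simpa [Q', Finset.sum_range_succ'] using h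

lemma Q_sub_eq (k : ℕ) (t : ℝ) : Q k t - k * t ^ (k - 1) = (1 - t) * Q' k t := by
  rcases k with _ | K
  · simp [Q, Q']
  induction K with
  | zero => simp [Q, Q']
  | succ K ih =>
    simp only [Q, Q', Nat.add_sub_cancel] at ih ⊢
    rw [Finset.sum_range_succ (fun i => t ^ i) (K + 1),
      Finset.sum_range_succ (fun i : ℕ => ((i : ℝ) + 1) * t ^ i) K]
    push_cast at ih ⊢
    linear_combination ih

lemma Q_mul_Q_sub (k : ℕ) (t : ℝ) : Q k t * (Q k t - k * t ^ (k - 1)) = Q' k t * (1 - t ^ k) := by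
  rw [Q_sub_eq, ← mul_neg_geom_sum]
  simp only [Q]
  ring

lemma one_le_Q {k : ℕ} (hk : 1 ≤ k) {t : ℝ} (ht : 0 ≤ t) : 1 ≤ Q k t := by
  simpa [Q] using Finset.single_le_sum (f := fun i => t ^ i) (fun i _ => pow_nonneg ht i)
    (Finset.mem_range.2 hk)

lemma Q'_nonneg (k : ℕ) {t : ℝ} (ht : 0 ≤ t) : 0 ≤ Q' k t :=
  Finset.sum_nonneg fun i _ => by positivity

lemma Q_zero {k : ℕ} (hk : 1 ≤ k) : Q k 0 = 1 := by
  obtain ⟨K, rfl⟩ := Nat.exists_eq_add_of_le' hk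
  simp [Q, Finset.sum_range_succ']

lemma Q_one (k : ℕ) : Q k 1 = k := by
  simp [Q]

lemma Q_mul_one_add_pow_pos {k : ℕ} (hk : 1 ≤ k) {t : ℝ} (ht : 0 ≤ t) :
    0 < Q k t * (1 + t ^ k) :=
  mul_pos (zero_lt_one.trans_le (one_le_Q hk ht)) (by positivity)

noncomputable def harmonicDefect (k n : ℕ) : ℝ := Real.log k - (H (k * (n + 1)) - H (n + 1))

lemma harmonicDefect_sub_succ {k : ℕ} (hk : 1 ≤ k) (n : ℕ) :
    harmonicDefect k n - harmonicDefect k (n + 1)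
      = ∫ t in (0 : ℝ)..1, t ^ (k * (n + 1)) * (Q k t - k * t ^ (k - 1)) := by
  have hsplit : ∀ t : ℝ, t ^ (k * (n + 1)) * (Q k t - k * t ^ (k - 1))
      = t ^ (k * (n + 1)) * Q k t - k * t ^ (k * (n + 2) - 1) := by
    intro t
    rw [show k * (n + 2) - 1 = k * (n + 1) + (k - 1) by
      rw [Nat.mul_succ]; omega, pow_add]
    ring
  simp only [hsplit]
  rw [integral_sub ((by fun_prop : Continuous _).intervalIntegrable _ _)
      ((by fun_prop : Continuous _).intervalIntegrable _ _), integral_pow_mul_Q, integral_const_mul,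
    integral_pow, show k * (n + 1) + k = k * (n + 1 + 1) by ring,
    Nat.cast_sub (by nlinarith : 1 ≤ k * (n + 2))]
  have e : H (n + 1 + 1) = H (n + 1) + 1 / ((n : ℝ) + 2) := by
    rw [H_add, Finset.sum_range_one]
    push_cast
    ring
  simp only [harmonicDefect, e]
  push_cast
  field_simp
  ring

lemma antitone_harmonicDefect {k : ℕ} (hk : 1 ≤ k) : Antitone (harmonicDefect k) := by
  refine antitone_nat_of_succ_le fun n => sub_nonneg.1 ?_
  rw [harmonicDefect_sub_succ hk]
  refine integral_nonneg zero_le_one fun t ht => mul_nonneg (pow_nonneg ht.1 _) ?_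
  rw [Q_sub_eq]
  exact mul_nonneg (sub_nonneg.2 ht.2) (Q'_nonneg k ht.1)

lemma tendsto_harmonicDefect {k : ℕ} (hk : 1 ≤ k) :
    Tendsto (harmonicDefect k) atTop (𝓝 0) := by
  have hn : Tendsto (fun n : ℕ => n + 1) atTop atTop := tendsto_add_atTop_nat 1
  have hkn : Tendsto (fun n : ℕ => k * (n + 1)) atTop atTop := hn.const_mul_atTop' hk
  have h := (Real.tendsto_harmonic_sub_log.comp hn).sub (Real.tendsto_harmonic_sub_log.comp hkn)
  rw [sub_self] at h
  refine h.congr fun n => ?_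
  simp only [Function.comp, harmonicDefect, H_eq_harmonic]
  push_cast
  rw [Real.log_mul (by positivity) (by positivity)]
  ring

noncomputable def kernel (k : ℕ) (t : ℝ) : ℝ := t ^ k * Q' k t / (Q k t * (1 + t ^ k))

lemma continuousOn_kernel {k : ℕ} (hk : 1 ≤ k) : ContinuousOn (kernel k) (Set.Icc 0 1) :=
  ContinuousOn.div (by fun_prop) (by fun_prop) fun t ht => (Q_mul_one_add_pow_pos hk ht.1).ne'

lemma intervalIntegrable_kernel_mul {k : ℕ} (hk : 1 ≤ k) {g : ℝ → ℝ} (hg : Continuous g) :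
    IntervalIntegrable (fun t => kernel k t * g t) MeasureTheory.volume 0 1 :=
  ((continuousOn_kernel hk).mul hg.continuousOn).intervalIntegrable_of_Icc zero_le_one

lemma kernel_mul_one_sub_pow_succ {k : ℕ} (hk : 1 ≤ k) {t : ℝ} (ht : 0 ≤ t) (m : ℕ) :
    kernel k t * (1 - t ^ (2 * k * (m + 1)))
      = kernel k t * (1 - t ^ (2 * k * m)) + t ^ (k * (2 * m + 1)) * (Q k t - k * t ^ (k - 1)) := by
  have hQ := (zero_lt_one.trans_le (one_le_Q hk ht)).ne'
  have hpow : 1 + t ^ k ≠ 0 := by positivity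
  unfold kernel
  field_simp
  linear_combination (-(t ^ (2 * k * m)) * (t ^ k + t ^ (2 * k))) * Q_mul_Q_sub k t

lemma sum_range_two_mul_harmonicDefect {k : ℕ} (hk : 1 ≤ k) (m : ℕ) :
    ∑ n ∈ Finset.range (2 * m), (-1 : ℝ) ^ n * harmonicDefect k n
      = ∫ t in (0 : ℝ)..1, kernel k t * (1 - t ^ (2 * k * m)) := by
  induction m with
  | zero => simp
  | succ m ih =>
    have hstep : ∫ t in (0 : ℝ)..1, kernel k t * (1 - t ^ (2 * k * (m + 1)))
        = (∫ t in (0 : ℝ)..1, kernel k t * (1 - t ^ (2 * k * m)))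
          + ∫ t in (0 : ℝ)..1, t ^ (k * (2 * m + 1)) * (Q k t - k * t ^ (k - 1)) := by
      rw [← integral_add (intervalIntegrable_kernel_mul hk (by fun_prop))
        ((by fun_prop : Continuous _).intervalIntegrable _ _)]
      exact integral_congr fun t ht =>
        kernel_mul_one_sub_pow_succ hk (by rw [Set.uIcc_of_le zero_le_one] at ht; exact ht.1) m
    rw [hstep, ← ih, ← harmonicDefect_sub_succ hk, mul_add_one, Finset.sum_range_succ,
      Finset.sum_range_succ, pow_succ, pow_mul]
    simp only [neg_one_sq, one_pow, one_mul]
    ring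

lemma tendsto_sum_range_two_mul_harmonicDefect {k : ℕ} (hk : 1 ≤ k) :
    Tendsto (fun m => ∑ n ∈ Finset.range (2 * m), (-1 : ℝ) ^ n * harmonicDefect k n) atTop
      (𝓝 (∫ t in (0 : ℝ)..1, kernel k t)) := by
  have htail := (tendsto_integral_mul_pow (continuousOn_kernel hk)).comp
    (tendsto_id.const_mul_atTop' (by omega : 0 < 2 * k))
  have hsplit (m : ℕ) : ∑ n ∈ Finset.range (2 * m), (-1 : ℝ) ^ n * harmonicDefect k n
      = (∫ t in (0 : ℝ)..1, kernel k t) - ∫ t in (0 : ℝ)..1, kernel k t * t ^ (2 * k * m) := by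
    rw [sum_range_two_mul_harmonicDefect hk, ← integral_sub
      ((continuousOn_kernel hk).intervalIntegrable_of_Icc zero_le_one)
      (intervalIntegrable_kernel_mul hk (continuous_pow _))]
    simp only [mul_one_sub]
  simpa [hsplit] using tendsto_const_nhds.sub htail

lemma integral_kernel {k : ℕ} (hk : 1 ≤ k) :
    ∫ t in (0 : ℝ)..1, kernel k t
      = (1 / 2) * Real.log (2 * k) - (1 / 2) * ∫ t in (0 : ℝ)..1, Q k t / (1 + t ^ k) := by
  have hQdiv : ContinuousOn (fun t => Q k t / (1 + t ^ k)) (Set.Icc 0 1) :=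
    ContinuousOn.div (by fun_prop) (by fun_prop) fun t ht => by have := ht.1; positivity
  have hderiv : ∀ t ∈ Set.uIcc (0 : ℝ) 1, HasDerivAt (fun t => Real.log (Q k t * (1 + t ^ k)))
      (2 * kernel k t + Q k t / (1 + t ^ k)) t := by
    intro t ht
    rw [Set.uIcc_of_le zero_le_one] at ht
    have hpos := Q_mul_one_add_pow_pos hk ht.1
    convert ((hasDerivAt_Q k t).fun_mul ((hasDerivAt_pow k t).const_add 1)).log hpos.ne' using 1
    have hQ := (zero_lt_one.trans_le (one_le_Q hk ht.1)).ne'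
    have hpow : 1 + t ^ k ≠ 0 := by have := ht.1; positivity
    unfold kernel
    field_simp
    linear_combination Q_mul_Q_sub k t
  have hint1 := (continuousOn_kernel hk).intervalIntegrable_of_Icc (μ := MeasureTheory.volume)
    zero_le_one
  have hint2 := hQdiv.intervalIntegrable_of_Icc (μ := MeasureTheory.volume) zero_le_one
  have h := integral_eq_sub_of_hasDerivAt hderiv ((hint1.const_mul 2).add hint2)
  rw [integral_add (hint1.const_mul 2) hint2, integral_const_mul] at h
  simp only [Q_one, Q_zero hk, one_pow, zero_pow (by omega : k ≠ 0)] at h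
  norm_num at h
  rw [mul_comm 2 (k : ℝ)]
  linarith

/-- For `k ≥ 2`, `S_k = (1/2)·log(2k) − (1/2)·∫₀¹ Q_k(t)/(1+t^k) dt`, where
`S_k = Σ_{n=1}^∞ (−1)^{n−1}(log k − (H_{kn} − H_n))` (the series converges). -/
theorem stmt_10 (k : ℕ) (hk : 2 ≤ k) :
    Tendsto (fun m => ∑ n ∈ Finset.range m,
        (-1 : ℝ) ^ n * (Real.log k - (H (k * (n + 1)) - H (n + 1))))
      atTop
      (𝓝 ((1 / 2) * Real.log (2 * k)
        - (1 / 2) * ∫ t in (0:ℝ)..1, Q k t / (1 + t ^ k))) := by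
  have hk1 : 1 ≤ k := by omega
  obtain ⟨l, hl⟩ := (antitone_harmonicDefect hk1).tendsto_alternating_series_of_tendsto_zero
    (tendsto_harmonicDefect hk1)
  have hl_eq : l = ∫ t in (0 : ℝ)..1, kernel k t :=
    tendsto_nhds_unique (hl.comp (tendsto_id.const_mul_atTop' two_pos))
      (tendsto_sum_range_two_mul_harmonicDefect hk1)
  rw [← integral_kernel hk1, ← hl_eq]
  exact hl
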